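/- Let n ≥ 3 and 2 ≤ r ≤ n−1 be integers. If there exists an n×n correlation matrix that is not r-decomposable, then there exists an n×n correlation matrix P that is not r-decomposable and such that no vector in any generating set of unit vectors for P is linearly independent from the remaining vectors of the set. -/

import Mathlib

/-!
Take a correlation matrix `P` that is not `r`-decomposable and has minimal rank among such
matrices, and unit vectors `v` generating it. If some `v c` lies outside the span `U` of the
others, write the projection of `v c` onto `U` as `t • y` with `t ≥ 0` and `y ∈ U` a unit vector.
Replacing `v c` by `y` yields unit vectors spanning the proper subspace `U`, hence a correlation
matrix `P'` of smaller rank, and `P = P' ⊙ Q` where `Q` (entries `1` inside the blocks `{c}` and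
`{c}ᶜ`, `t` across them) is the Gram matrix of unit vectors in `ℂ²`. As `rank Q ≤ 2 ≤ r`, the
matrix `P'` is not `r`-decomposable either, contradicting minimality.
-/
open scoped ComplexOrder ComplexInnerProductSpace

/-- A correlation matrix: positive semidefinite with ones on the diagonal. -/
def IsCorrMat {n : ℕ} (P : Matrix (Fin n) (Fin n) ℂ) : Prop :=
  P.PosSemidef ∧ ∀ a, P a a = 1

/-- `P` is `r`-decomposable: a finite Schur (entrywise) product of correlation
matrices each of rank at most `r`. -/
def IsDecomposable {n : ℕ} (r : ℕ) (P : Matrix (Fin n) (Fin n) ℂ) : Prop :=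
  ∃ m : ℕ, 0 < m ∧ ∃ R : Fin m → Matrix (Fin n) (Fin n) ℂ,
    (∀ i, IsCorrMat (R i) ∧ (R i).rank ≤ r) ∧ ∀ a b, P a b = ∏ i, R i a b

open Module Submodule Matrix

namespace Matrix
variable {𝕜 E ι : Type*} [RCLike 𝕜] [NormedAddCommGroup E] [InnerProductSpace 𝕜 E]
  [FiniteDimensional 𝕜 E] [Fintype ι]

theorem rank_gram (v : ι → E) : (gram 𝕜 v).rank = finrank 𝕜 (span 𝕜 (Set.range v)) := by
  let b := stdOrthonormalBasis 𝕜 E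
  let e : E ≃ₗ[𝕜] (Fin (finrank 𝕜 E) → 𝕜) :=
    b.repr.toLinearEquiv.trans (WithLp.linearEquiv 2 𝕜 _)
  have hcols :
      Set.range (of fun i j => b.repr (v j) i).col = (e : E →ₗ[𝕜] _) '' Set.range v := by
    rw [← Set.range_comp]; rfl
  rw [gram_eq_conjTranspose_mul b, rank_conjTranspose_mul_self, rank_eq_finrank_span_cols,
    hcols, ← Submodule.map_span]
  exact LinearEquiv.finrank_map_eq e _

theorem rank_gram_le_finrank (v : ι → E) : (gram 𝕜 v).rank ≤ finrank 𝕜 E :=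
  (rank_gram v).trans_le (Submodule.finrank_le _)

end Matrix

theorem Submodule.exists_norm_eq_one_smul_eq {𝕜 E : Type*} [RCLike 𝕜] [NormedAddCommGroup E]
    [InnerProductSpace 𝕜 E] {U : Submodule 𝕜 E} {x u : E} (hxU : x ∈ U) (hx : ‖x‖ = 1)
    (huU : u ∈ U) : ∃ y ∈ U, ‖y‖ = 1 ∧ u = (‖u‖ : 𝕜) • y := by
  by_cases hu : u = 0
  · exact ⟨x, hxU, hx, by simp [hu]⟩
  · have hu' : (‖u‖ : 𝕜) ≠ 0 := by simpa using hu
    refine ⟨(‖u‖ : 𝕜)⁻¹ • u, U.smul_mem _ huU, ?_, (smul_inv_smul₀ hu' u).symm⟩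
    rw [norm_smul, norm_inv, RCLike.norm_ofReal, abs_norm,
      inv_mul_cancel₀ (norm_ne_zero_iff.mpr hu)]

section Correlation
variable {n : ℕ}

theorem isCorrMat_gram {E : Type*} [NormedAddCommGroup E] [InnerProductSpace ℂ E]
    {v : Fin n → E} (hv : ∀ a, ‖v a‖ = 1) : IsCorrMat (gram ℂ v) :=
  ⟨posSemidef_gram ℂ v, fun a => by simp [gram_apply, inner_self_eq_norm_sq_to_K, hv a]⟩

theorem IsDecomposable.hadamard {r : ℕ} {P Q : Matrix (Fin n) (Fin n) ℂ}
    (hP : IsDecomposable r P) (hQ : IsCorrMat Q) (hQr : Q.rank ≤ r) :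
    IsDecomposable r (P ⊙ Q) := by
  obtain ⟨m, -, R, hR, hPR⟩ := hP
  refine ⟨m + 1, m.succ_pos, Fin.snoc R Q, fun i => ?_, fun a b => ?_⟩
  · induction i using Fin.lastCases <;> simp [hR, hQ, hQr]
  · simp [Fin.prod_univ_castSucc, hPR]

def twoBlockCorr (c : Fin n) (t : ℝ) : Matrix (Fin n) (Fin n) ℂ :=
  of fun a b => if (a = c ↔ b = c) then 1 else (t : ℂ)

theorem twoBlockCorr_eq_gram (c : Fin n) {t : ℝ} (ht : |t| ≤ 1) :
    twoBlockCorr c t = gram ℂ (fun a => if a = c then !₂[(t : ℂ), (√(1 - t ^ 2) : ℂ)]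
      else !₂[1, 0]) := by
  have hsq : √(1 - t ^ 2) ^ 2 = 1 - t ^ 2 :=
    Real.sq_sqrt (by nlinarith [abs_le.mp ht])
  ext a b
  by_cases ha : a = c <;> by_cases hb : b = c <;>
    simp [twoBlockCorr, gram_apply, ha, hb, PiLp.inner_apply, Fin.sum_univ_two,
      EuclideanSpace.norm_eq, hsq]

theorem isCorrMat_twoBlockCorr (c : Fin n) {t : ℝ} (ht : |t| ≤ 1) :
    IsCorrMat (twoBlockCorr c t) :=
  ⟨twoBlockCorr_eq_gram c ht ▸ posSemidef_gram ℂ _, fun a => by simp [twoBlockCorr]⟩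

theorem rank_twoBlockCorr_le (c : Fin n) {t : ℝ} (ht : |t| ≤ 1) :
    (twoBlockCorr c t).rank ≤ 2 :=
  twoBlockCorr_eq_gram c ht ▸ (rank_gram_le_finrank _).trans_eq (finrank_euclideanSpace_fin)

end Correlation

section GramFactorization
variable {n : ℕ} {E : Type*} [NormedAddCommGroup E] [InnerProductSpace ℂ E]
  [FiniteDimensional ℂ E]

theorem exists_gram_eq_hadamard_twoBlockCorr {v : Fin n → E} (hv : ∀ a, ‖v a‖ = 1)
    {a₀ c : Fin n} (ha₀ : a₀ ≠ c) :
    ∃ w : Fin n → E, (∀ a, ‖w a‖ = 1) ∧ (∀ a, w a ∈ span ℂ {x | ∃ a, a ≠ c ∧ x = v a}) ∧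
      ∃ t : ℝ, |t| ≤ 1 ∧ gram ℂ v = gram ℂ w ⊙ twoBlockCorr c t := by
  set U := span ℂ {x | ∃ a, a ≠ c ∧ x = v a}
  have hvU : ∀ a, a ≠ c → v a ∈ U := fun a ha => subset_span ⟨a, ha, rfl⟩
  obtain ⟨y, hyU, hy, huy⟩ :=
    U.exists_norm_eq_one_smul_eq (hvU a₀ ha₀) (hv a₀) (U.starProjection_apply_mem (v c))
  set t := ‖U.starProjection (v c)‖
  have hproj : ∀ a, a ≠ c → ⟪v a, v c⟫ = t * ⟪v a, y⟫ := fun a ha => calc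
    ⟪v a, v c⟫ = ⟪U.starProjection (v a), v c⟫ := by
      rw [starProjection_eq_self_iff.mpr (hvU a ha)]
    _ = t * ⟪v a, y⟫ := by
      rw [inner_starProjection_left_eq_right, huy, inner_smul_right]; rfl
  refine ⟨Function.update v c y, fun a => ?_, fun a => ?_, t, ?_, ?_⟩
  · rcases eq_or_ne a c with rfl | ha
    · simpa using hy
    · simpa [ha] using hv a
  · rcases eq_or_ne a c with rfl | ha
    · simpa using hyU
    · simpa [ha] using hvU a ha
  · rw [abs_norm]; exact (U.norm_starProjection_apply_le (v c)).trans_eq (hv c)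
  · ext a b
    by_cases ha : a = c <;> by_cases hb : b = c
    · simp [twoBlockCorr, gram_apply, inner_self_eq_norm_sq_to_K, ha, hb, hv, hy]
    · rw [ha, gram_apply, ← inner_conj_symm, hproj b hb]
      simp [twoBlockCorr, gram_apply, hb, mul_comm]
    · rw [hb, gram_apply, hproj a ha]
      simp [twoBlockCorr, gram_apply, ha, mul_comm]
    · simp [twoBlockCorr, gram_apply, ha, hb]

theorem exists_gram_eq_hadamard_rank_lt_of_notMem_span {v : Fin n → E} (hv : ∀ a, ‖v a‖ = 1)
    {a₀ c : Fin n} (ha₀ : a₀ ≠ c) (hc : v c ∉ span ℂ {x | ∃ a, a ≠ c ∧ x = v a}) :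
    ∃ w : Fin n → E, (∀ a, ‖w a‖ = 1) ∧ (gram ℂ w).rank < (gram ℂ v).rank ∧
      ∃ Q : Matrix (Fin n) (Fin n) ℂ, IsCorrMat Q ∧ Q.rank ≤ 2 ∧ gram ℂ v = gram ℂ w ⊙ Q := by
  obtain ⟨w, hw, hwU, t, ht, hvw⟩ := exists_gram_eq_hadamard_twoBlockCorr hv ha₀
  refine ⟨w, hw, ?_, _, isCorrMat_twoBlockCorr c ht, rank_twoBlockCorr_le c ht, hvw⟩
  have hUv : span ℂ {x | ∃ a, a ≠ c ∧ x = v a} ≤ span ℂ (Set.range v) :=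
    span_mono fun _ ⟨a, _, hx⟩ => ⟨a, hx.symm⟩
  have hwv : span ℂ (Set.range w) < span ℂ (Set.range v) :=
    (span_le.mpr (Set.range_subset_iff.mpr hwU)).trans_lt <|
      hUv.lt_of_ne fun h => hc (h ▸ subset_span ⟨c, rfl⟩)
  rw [rank_gram, rank_gram]
  exact finrank_lt_finrank_of_lt hwv

end GramFactorization

theorem stmt19_general (n r : ℕ) (hn : 3 ≤ n) (hr2 : 2 ≤ r)
    (h : ∃ P : Matrix (Fin n) (Fin n) ℂ, IsCorrMat P ∧ ¬ IsDecomposable r P) :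
    ∃ P : Matrix (Fin n) (Fin n) ℂ, IsCorrMat P ∧ ¬ IsDecomposable r P ∧
      ∀ (s : ℕ) (v : Fin n → EuclideanSpace ℂ (Fin s)), (∀ a, ‖v a‖ = 1) →
        (∀ a b, P a b = ⟪v a, v b⟫) →
        ∀ c, v c ∈ Submodule.span ℂ {x | ∃ a, a ≠ c ∧ x = v a} := by
  obtain ⟨P, ⟨hP, hPr⟩, hmin⟩ :=
    (measure fun P : Matrix (Fin n) (Fin n) ℂ => P.rank).wf.has_min
      {P | IsCorrMat P ∧ ¬ IsDecomposable r P} h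
  refine ⟨P, hP, hPr, fun s v hv hPv c => by_contra fun hc => ?_⟩
  have : Nontrivial (Fin n) := Fin.nontrivial_iff_two_le.mpr (by omega)
  obtain ⟨a₀, ha₀⟩ := exists_ne c
  obtain rfl : P = gram ℂ v := Matrix.ext hPv
  obtain ⟨w, hw, hlt, Q, hQ, hQ2, hvw⟩ := exists_gram_eq_hadamard_rank_lt_of_notMem_span hv ha₀ hc
  exact hmin (gram ℂ w)
    ⟨isCorrMat_gram hw, fun hd => hPr (hvw ▸ hd.hadamard hQ (hQ2.trans hr2))⟩ hlt

/-- If some `n × n` correlation matrix is not `r`-decomposable (`n ≥ 3`,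
`2 ≤ r ≤ n - 1`), then there is one, `P`, such that additionally in every generating
set of unit vectors for `P`, every vector lies in the span of the remaining ones. -/
theorem stmt19 (n r : ℕ) (hn : 3 ≤ n) (hr2 : 2 ≤ r) (hrn : r ≤ n - 1)
    (h : ∃ P : Matrix (Fin n) (Fin n) ℂ, IsCorrMat P ∧ ¬ IsDecomposable r P) :
    ∃ P : Matrix (Fin n) (Fin n) ℂ, IsCorrMat P ∧ ¬ IsDecomposable r P ∧
      ∀ (s : ℕ) (v : Fin n → EuclideanSpace ℂ (Fin s)), (∀ a, ‖v a‖ = 1) →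
        (∀ a b, P a b = ⟪v a, v b⟫) →
        ∀ c, v c ∈ Submodule.span ℂ {x | ∃ a, a ≠ c ∧ x = v a} :=
  stmt19_general n r hn hr2 h
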